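/- Let s ≥ 1 and set 𝔹_s := A_0^1 + B_s^0 as planar polynomial vector fields. For natural numbers n ≥ 1 and m ≥ s, with 𝔅_m^n := Σ_{l=0}^{n-1} [ (m−s)_s^l / (m−n+1)_{s+1}^{l+1} ] B_{m+ls}^{n-1-l}, one has B_m^n + [𝔹_s, 𝔅_m^n] = [ (m−s)_s^n / (m−n+1)_{s+1}^n ] B_{m+ns}^0, provided all denominators are nonzero. -/
import Mathlib


noncomputable section
namespace BT

open MvPolynomial Finset

/-- Polynomials in two variables x, y over ℝ. -/
abbrev P2 : Type := MvPolynomial (Fin 2) ℝ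

/-- The coordinate x. -/
def px : P2 := MvPolynomial.X 0
/-- The coordinate y. -/
def py : P2 := MvPolynomial.X 1

/-- Partial derivative in x. -/
def dx (p : P2) : P2 := pderiv 0 p
/-- Partial derivative in y. -/
def dy (p : P2) : P2 := pderiv 1 p

/-- A planar polynomial vector field, given by its two components. -/
abbrev VF : Type := P2 × P2

/-- Lie bracket of vector fields (commutator of derivations). -/
def lie (v w : VF) : VF :=
  (v.1 * dx w.1 + v.2 * dy w.1 - w.1 * dx v.1 - w.2 * dy v.1,
   v.1 * dx w.2 + v.2 * dy w.2 - w.1 * dx v.2 - w.2 * dy v.2)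

/-- Scalar multiple of a vector field. -/
def rsmul (c : ℝ) (v : VF) : VF := (C c * v.1, C c * v.2)

/-- Product of a polynomial function with a vector field (componentwise). -/
def psmul (p : P2) (v : VF) : VF := (p * v.1, p * v.2)

/-- The vector field A_k^l. -/
def A (k l : ℤ) : VF :=
  (C (((k : ℝ) - l + 1) / ((k : ℝ) + 2)) * px ^ (l + 1).toNat * py ^ (k - l).toNat,
   - (C (((l : ℝ) + 1) / ((k : ℝ) + 2)) * px ^ l.toNat * py ^ (k - l + 1).toNat))

/-- The vector field B_k^l. -/
def B (k l : ℤ) : VF :=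
  (px ^ (l + 1).toNat * py ^ (k - l).toNat,
   px ^ l.toNat * py ^ (k - l + 1).toNat)

/-- The monomial Z_k^l = x^l y^(k-l). -/
def Z (k l : ℤ) : P2 := px ^ l.toNat * py ^ (k - l).toNat

/-- The principal part 𝔹_s = A_0^1 + B_s^0. -/
def Bbs (s : ℤ) : VF := A 0 1 + B s 0

/-- The Pochhammer k-symbol (a)_k^n = a (a+k) (a+2k) ⋯ (a+(n-1)k). -/
def poch (a k : ℝ) (n : ℕ) : ℝ := ∏ j ∈ Finset.range n, (a + j * k)

def B' (a b : ℕ) : VF := (px^(b+1) * py^a, px^b * py^(a+1))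

lemma dx_pow (i j : ℕ) : dx (px^i * py^j) = (i:P2) * px^(i-1) * py^j := by
  simp [dx, px, py, pderiv_mul, pderiv_pow, pderiv_X_of_ne (show (1:Fin 2) ≠ 0 by decide)]
  ring

lemma dy_pow (i j : ℕ) : dy (px^i * py^j) = (j:P2) * px^i * py^(j-1) := by
  simp [dy, px, py, pderiv_mul, pderiv_pow, pderiv_X_of_ne (show (0:Fin 2) ≠ 1 by decide)]
  ring

lemma Bbs_eq (s : ℕ) : Bbs (s:ℤ) = (px^1 * py^s, px^0 * py^(s+1) - px^1 * py^0) := by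
  have h1 : ((s:ℤ) - 0).toNat = s := by omega
  have h2 : ((s:ℤ) - 0 + 1).toNat = s + 1 := by omega
  simp only [Bbs, A, B, Prod.mk_add_mk, Prod.ext_iff, h1, h2]
  constructor <;> (norm_num; try ring)

lemma dx_sub (p q : P2) : dx (p - q) = dx p - dx q := map_sub _ _ _
lemma dy_sub (p q : P2) : dy (p - q) = dy p - dy q := map_sub _ _ _

lemma B_cast (a b : ℕ) : B ((a:ℤ)+b) b = B' a b := by
  have h1 : ((b:ℤ)+1).toNat = b+1 := by omega
  have h2 : ((a:ℤ)+b-b).toNat = a := by omega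
  have h3 : ((a:ℤ)+b-b+1).toNat = a+1 := by omega
  simp [B, B', h1, h2, h3]

lemma key (s a b : ℕ) : lie (Bbs ((s:ℤ)+1)) (B' (a+1) b) =
    rsmul ((a:ℝ)+1+b-(s+1)) (B' (a+1+s+1) b) - rsmul ((a:ℝ)+1) (B' a (b+1)) := by
  have hcast : ((s:ℤ)+1) = ((s+1:ℕ):ℤ) := by push_cast; ring
  rw [hcast, Bbs_eq]
  rcases b with _ | b <;>
  simp only [lie, B', rsmul, Prod.fst, Prod.snd, dx_sub, dy_sub,
    dx_pow, dy_pow, mul_sub, sub_mul, map_add, map_sub, map_one, map_natCast,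
    Nat.add_sub_cancel, Prod.mk_sub_mk, Prod.ext_iff] <;>
  (constructor <;> (push_cast; ring))

lemma lie_add (v w u : VF) : lie v (w + u) = lie v w + lie v u := by
  simp only [lie, Prod.fst_add, Prod.snd_add, Prod.mk_add_mk, Prod.ext_iff, dx, dy, map_add]
  constructor <;> ring

lemma lie_zero (v : VF) : lie v 0 = 0 := by
  simp [lie, dx, dy, Prod.ext_iff]

lemma lie_sum (v : VF) (t : Finset ℕ) (f : ℕ → VF) :
    lie v (∑ l ∈ t, f l) = ∑ l ∈ t, lie v (f l) := by
  induction t using Finset.cons_induction with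
  | empty => simp [lie_zero]
  | cons a t ha ih => rw [Finset.sum_cons, Finset.sum_cons, lie_add, ih]

lemma lie_rsmul (v : VF) (c : ℝ) (w : VF) : lie v (rsmul c w) = rsmul c (lie v w) := by
  simp only [lie, rsmul, Prod.fst, Prod.snd, dx, dy, pderiv_C_mul, Prod.ext_iff]
  try (constructor <;> ring)

lemma rsmul_rsmul (c d : ℝ) (v : VF) : rsmul c (rsmul d v) = rsmul (c*d) v := by
  simp only [rsmul, Prod.ext_iff, map_mul]
  try (constructor <;> ring)

lemma rsmul_sub (c : ℝ) (v w : VF) : rsmul c (v - w) = rsmul c v - rsmul c w := by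
  simp only [rsmul, Prod.fst_sub, Prod.snd_sub, Prod.mk_sub_mk, Prod.ext_iff, mul_sub]

lemma rsmul_one (v : VF) : rsmul 1 v = v := by
  simp [rsmul]

lemma rsmul_congr (c d : ℝ) (v : VF) (h : c = d) : rsmul c v = rsmul d v := by rw [h]

lemma poch_succ (a k : ℝ) (n : ℕ) : poch a k (n+1) = poch a k n * (a + n*k) :=
  Finset.prod_range_succ _ _

lemma poch_zero (a k : ℝ) : poch a k 0 = 1 := rfl

/-- The telescoping family. -/
def F (m n s l : ℕ) : VF :=
  rsmul (poch ((m:ℝ)-s) s l / poch ((m:ℝ)-n+1) (s+1) l) (B' ((m-n)+l*(s+1)) (n-l))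

lemma step (s m n l : ℕ) (hs : 1 ≤ s) (hnm : n ≤ m) (hl : l < n) :
    lie (Bbs (s:ℤ))
      (rsmul (poch ((m:ℝ)-s) s l / poch ((m:ℝ)-n+1) (s+1) (l+1))
        (B' ((m-n)+l*(s+1)+1) (n-1-l)))
    = F m n s (l+1) - F m n s l := by
  obtain ⟨s, rfl⟩ : ∃ s', s = s'+1 := ⟨s-1, by omega⟩
  rw [lie_rsmul, (by push_cast; ring : ((s+1:ℕ):ℤ) = (s:ℤ)+1), key s ((m-n)+l*(s+1+1)) (n-1-l), rsmul_sub, rsmul_rsmul, rsmul_rsmul]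
  have ha : (((m-n+l*(s+1+1)):ℕ):ℝ) = (m:ℝ)-n+l*((s:ℝ)+1+1) := by
    push_cast [Nat.cast_sub hnm]; ring
  have hb : (((n-1-l):ℕ):ℝ) = (n:ℝ)-1-l := by
    rw [Nat.sub_sub, Nat.cast_sub (by omega : 1+l ≤ n)]; push_cast; ring
  have hy : (m:ℝ)-(n:ℝ)+1+(l:ℝ)*((s:ℝ)+1+1) ≠ 0 := by
    have e : (m:ℝ)-(n:ℝ)+1+(l:ℝ)*((s:ℝ)+1+1) = ((m-n+l*(s+1+1)+1 : ℕ):ℝ) := by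
      push_cast [Nat.cast_sub hnm]; ring
    rw [e]
    exact (Nat.cast_pos.mpr (Nat.succ_pos _)).ne'
  have hF1 : F m n (s+1) (l+1) =
      rsmul (poch ((m:ℝ)-(s+1)) (s+1) l / poch ((m:ℝ)-n+1) ((s+1)+1) (l+1) *
        ((((m-n+l*(s+1+1)):ℕ):ℝ)+1+((n-1-l:ℕ):ℝ)-((s:ℝ)+1)))
        (B' ((m-n)+l*(s+1+1)+1+s+1) (n-1-l)) := by
    unfold F
    have e1 : m-n+(l+1)*(s+1+1) = m-n+l*(s+1+1)+1+s+1 := by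
      rw [Nat.succ_mul]; generalize l*(s+1+1) = t; omega
    have e2 : n-(l+1) = n-1-l := by omega
    rw [e1, e2]
    apply rsmul_congr
    rw [ha, hb]
    push_cast
    rw [poch_succ ((m:ℝ)-((s:ℝ)+1)) ((s:ℝ)+1) l]
    ring_nf
  have hF2 : F m n (s+1) l =
      rsmul (poch ((m:ℝ)-(s+1)) (s+1) l / poch ((m:ℝ)-n+1) ((s+1)+1) (l+1) *
        ((((m-n+l*(s+1+1)):ℕ):ℝ)+1))
        (B' ((m-n)+l*(s+1+1)) (n-1-l+1)) := by
    unfold F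
    have e2 : n-l = n-1-l+1 := by omega
    rw [e2]
    apply rsmul_congr
    rw [ha]
    push_cast
    rw [poch_succ ((m:ℝ)-(n:ℝ)+1) ((s:ℝ)+1+1) l]
    have e3 : (m:ℝ)-(n:ℝ)+(l:ℝ)*((s:ℝ)+1+1)+1 = (m:ℝ)-(n:ℝ)+1+(l:ℝ)*((s:ℝ)+1+1) := by
      ring
    rw [e3, eq_comm, div_mul_eq_mul_div, mul_div_mul_right _ _ hy]
  rw [hF1, hF2]
  push_cast
  norm_num


/-- Lemma (BReduce): B_m^n + [𝔹_s, 𝔅_m^n] = ((m-s)_s^n / (m-n+1)_{s+1}^n) B_{m+ns}^0,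
where 𝔅_m^n = Σ_{l=0}^{n-1} ((m-s)_s^l / (m-n+1)_{s+1}^{l+1}) B_{m+ls}^{n-1-l}. -/
theorem BReduce (s n m : ℕ) (hs : 1 ≤ s) (hn : 1 ≤ n) (hsm : s ≤ m) (hnm : n ≤ m)
    (hden : ∀ l < n, poch ((m : ℝ) - n + 1) ((s : ℝ) + 1) (l + 1) ≠ 0) :
    B (m : ℤ) (n : ℤ) +
        lie (Bbs (s : ℤ))
          (∑ l ∈ Finset.range n,
            rsmul (poch ((m : ℝ) - s) (s : ℝ) l / poch ((m : ℝ) - n + 1) ((s : ℝ) + 1) (l + 1))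
              (B ((m : ℤ) + l * s) ((n : ℤ) - 1 - l))) =
      rsmul (poch ((m : ℝ) - s) (s : ℝ) n / poch ((m : ℝ) - n + 1) ((s : ℝ) + 1) n)
        (B ((m : ℤ) + n * s) 0) := by
  have hsum : ∀ l ∈ Finset.range n,
      lie (Bbs (s:ℤ)) (rsmul (poch ((m:ℝ)-s) s l / poch ((m:ℝ)-n+1) ((s:ℝ)+1) (l+1))
        (B ((m:ℤ)+l*s) ((n:ℤ)-1-l)))
      = F m n s (l+1) - F m n s l := by
    intro l hl
    rw [Finset.mem_range] at hl
    have hc2 : (((n-1-l):ℕ):ℤ) = (n:ℤ)-1-l := by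
      rw [Nat.sub_sub, Nat.cast_sub (by omega : 1+l ≤ n)]; push_cast; ring
    have hc1 : (((m-n)+l*(s+1)+1 : ℕ):ℤ) = (m:ℤ)-n+l*((s:ℤ)+1)+1 := by
      push_cast [Nat.cast_sub hnm]; ring
    have hB : B ((m:ℤ)+l*s) ((n:ℤ)-1-l) = B' ((m-n)+l*(s+1)+1) (n-1-l) := by
      have h := B_cast ((m-n)+l*(s+1)+1) (n-1-l)
      rw [hc1, hc2] at h
      rw [← h]
      congr 1
      ring
    rw [hB]
    exact step s m n l hs hnm hl
  rw [lie_sum, Finset.sum_congr rfl hsum, Finset.sum_range_sub (F m n s)]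
  have hF0 : F m n s 0 = B (m:ℤ) (n:ℤ) := by
    have h := B_cast (m-n) n
    have e : ((m-n:ℕ):ℤ) + (n:ℕ) = (m:ℤ) := by omega
    rw [e] at h
    simp only [F, poch_zero, Nat.zero_mul, Nat.add_zero, Nat.sub_zero, div_one, rsmul_one, ← h]
  have hFn : F m n s n = rsmul (poch ((m:ℝ)-s) s n / poch ((m:ℝ)-n+1) ((s:ℝ)+1) n)
      (B ((m:ℤ)+n*s) 0) := by
    have h := B_cast ((m-n)+n*(s+1)) 0
    have e : ((((m-n)+n*(s+1)):ℕ):ℤ) + ((0:ℕ):ℤ) = (m:ℤ)+n*s := by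
      push_cast [Nat.cast_sub hnm]; ring
    rw [e] at h
    rw [show ((0:ℕ):ℤ) = (0:ℤ) from rfl] at h
    simp only [F, Nat.sub_self, ← h]
  rw [hF0, hFn]
  abel


end BT
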